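/- arXiv:1704.03319 — 5 statements merged into one kernel-verified Lean document; each statement's English description precedes it below -/
import Mathlib

section
/- For any fast quorum FQ and classic quorum CQ over N nodes, the intersection FQ ∩ CQ has size at least ⌊CQ_size/2⌋+1, where CQ_size = ⌊N/2⌋+1; that is, |FQ ∩ CQ| ≥ ⌊(⌊N/2⌋+1)/2⌋+1. -/
theorem stmt_2 (N : ℕ) (hN : 1 ≤ N)
    (FQ CQ : Finset (Fin N))
    (hFQ : (3 * N + 3) / 4 ≤ FQ.card)
    (hCQ : N / 2 + 1 ≤ CQ.card) :
    (N / 2 + 1) / 2 + 1 ≤ (FQ ∩ CQ).card := by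
  have h := Finset.card_inter_add_card_union FQ CQ
  have hu : (FQ ∪ CQ).card ≤ N := by
    simpa using (Finset.card_le_univ (FQ ∪ CQ))
  omega
end

section
/- For any two fast quorums FQ1, FQ2 and any classic quorum CQ over a set of N nodes, the triple intersection FQ1 ∩ FQ2 ∩ CQ is non-empty. -/
theorem stmt_3 (N : ℕ) (hN : 1 ≤ N)
    (FQ1 FQ2 CQ : Finset (Fin N))
    (h1 : (3 * N + 3) / 4 ≤ FQ1.card)
    (h2 : (3 * N + 3) / 4 ≤ FQ2.card)
    (h3 : N / 2 + 1 ≤ CQ.card) :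
    (FQ1 ∩ FQ2 ∩ CQ).Nonempty := by
  rw [← Finset.card_pos]
  have hA := Finset.card_inter_add_card_union FQ1 FQ2
  have hB := Finset.card_inter_add_card_union (FQ1 ∩ FQ2) CQ
  have hU1 : (FQ1 ∪ FQ2).card ≤ N := le_trans (Finset.card_le_univ _) (by simp)
  have hU2 : ((FQ1 ∩ FQ2) ∪ CQ).card ≤ N := le_trans (Finset.card_le_univ _) (by simp)
  omega
end

section
/- If a subset S of a classic quorum CQ has size at least ⌊|CQ|/2⌋+1, and FQ is a fast quorum, then S ∩ FQ is non-empty, where |CQ| = ⌊N/2⌋+1 and |FQ| ≥ ⌈3N/4⌉ over N nodes. -/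
theorem stmt_4 (N : ℕ) (hN : 1 ≤ N)
    (CQ S FQ : Finset (Fin N))
    (hCQcard : CQ.card = N / 2 + 1)
    (hS : S ⊆ CQ)
    (hScard : CQ.card / 2 + 1 ≤ S.card)
    (hFQ : (3 * N + 3) / 4 ≤ FQ.card) :
    (S ∩ FQ).Nonempty := by
  have h1 := Finset.card_union_add_card_inter S FQ
  have h2 : (S ∪ FQ).card ≤ N := by
    simpa using Finset.card_le_univ (S ∪ FQ)
  have : 0 < (S ∩ FQ).card := by omega
  exact Finset.card_pos.mp this
end

section
/- Let ballots be natural numbers and suppose each node processes a message for command c with ballot B only if its locally stored ballot for c is ≤ B, updating its stored ballot to B upon a Recovery message with ballot B. If two recovery leaders successfully collect classic-quorum replies with ballots B1 < B2, then for every classic quorum S, there exists a node in S whose stored ballot exceeds B1 after replying to the second leader, hence that node never subsequently accepts messages with ballot B1. -/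
/-- Ballot-based mutual exclusion of recovery leaders: if a second leader
successfully collects classic-quorum replies with ballot B2 > B1, then every
classic quorum contains a node whose stored ballot permanently exceeds B1
from the reply time on (hence it never again accepts ballot-B1 messages). -/
theorem stmt_14 (N : ℕ) (hN : 1 ≤ N)
    (Ballot : ℕ → Fin N → ℕ)  -- stored ballot for command c, over time
    (hmono : ∀ j : Fin N, Monotone (fun t => Ballot t j))
    (B1 B2 : ℕ) (hB : B1 < B2)
    (Q2 : Finset (Fin N)) (hQ2card : N / 2 + 1 ≤ Q2.card)
    (t2 : ℕ) (hreply : ∀ j ∈ Q2, Ballot t2 j = B2) :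
    ∀ S : Finset (Fin N), N / 2 + 1 ≤ S.card →
      ∃ j ∈ S, ∀ t, t2 ≤ t → B1 < Ballot t j := by
  intro S hS
  have hinter : (S ∩ Q2).Nonempty := by
    rw [← Finset.card_pos]
    have h1 := Finset.card_union_add_card_inter S Q2
    have h2 : (S ∪ Q2).card ≤ N := by
      simpa using Finset.card_le_card (Finset.subset_univ (S ∪ Q2))
    omega
  obtain ⟨j, hj⟩ := hinter
  rw [Finset.mem_inter] at hj
  refine ⟨j, hj.1, fun t ht => ?_⟩
  have h3 := hmono j ht
  have h4 := hreply j hj.2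
  simp only at h3
  omega
end

section
/- Let two sequences of commands s1 and s2 contain exactly the same commands (as multisets) and order every pair of conflicting commands identically. Then s1 and s2 are equivalent as C-structs, i.e., s2 can be obtained from s1 by a sequence of adjacent transpositions of non-conflicting commands. -/
/-- One adjacent swap of two non-conflicting (commutative) commands. -/
def SwapAdj {Cmd : Type} (conflict : Cmd → Cmd → Prop) (l1 l2 : List Cmd) : Prop :=
  ∃ (a b : Cmd) (p q : List Cmd), ¬ conflict a b ∧
    l1 = p ++ a :: b :: q ∧ l2 = p ++ b :: a :: q

private lemma swapadj_cons {Cmd : Type} {c : Cmd → Cmd → Prop} {l1 l2 : List Cmd} (x : Cmd)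
    (h : SwapAdj c l1 l2) : SwapAdj c (x :: l1) (x :: l2) := by
  obtain ⟨a, b, p, q, hc, h1, h2⟩ := h
  exact ⟨a, b, x :: p, q, hc, by simp [h1], by simp [h2]⟩

private lemma eqv_cons {Cmd : Type} {c : Cmd → Cmd → Prop} {l1 l2 : List Cmd} (x : Cmd)
    (h : Relation.EqvGen (SwapAdj c) l1 l2) :
    Relation.EqvGen (SwapAdj c) (x :: l1) (x :: l2) := by
  induction h with
  | rel _ _ h => exact .rel _ _ (swapadj_cons x h)
  | refl => exact .refl _
  | symm _ _ _ ih => exact .symm _ _ ih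
  | trans _ _ _ _ _ ih1 ih2 => exact .trans _ _ _ ih1 ih2

private lemma move_front {Cmd : Type} {c : Cmd → Cmd → Prop} (b : Cmd) (p q : List Cmd)
    (h : ∀ a ∈ p, ¬ c a b) :
    Relation.EqvGen (SwapAdj c) (p ++ b :: q) (b :: (p ++ q)) := by
  induction p with
  | nil => exact .refl _
  | cons x p' ih =>
      have step1 : Relation.EqvGen (SwapAdj c) (x :: (p' ++ b :: q)) (x :: b :: (p' ++ q)) :=
        eqv_cons x (ih fun a ha => h a (List.mem_cons_of_mem _ ha))
      have step2 : SwapAdj c (x :: b :: (p' ++ q)) (b :: x :: (p' ++ q)) :=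
        ⟨x, b, [], p' ++ q, h x (List.mem_cons_self), rfl, rfl⟩
      exact .trans _ _ _ step1 (.rel _ _ step2)

/-- Two duplicate-free sequences with the same commands that order every pair
of conflicting commands identically are equivalent as C-structs. -/
theorem stmt_17 {Cmd : Type} [DecidableEq Cmd]
    (conflict : Cmd → Cmd → Prop)
    (hsymm : ∀ a b, conflict a b → conflict b a)
    (hirr : ∀ a, ¬ conflict a a)
    (s1 s2 : List Cmd)
    (hnodup : s1.Nodup)
    (hperm : s1.Perm s2)
    (horder : ∀ a b, a ∈ s1 → b ∈ s1 → conflict a b →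
      (s1.idxOf a < s1.idxOf b ↔ s2.idxOf a < s2.idxOf b)) :
    Relation.EqvGen (SwapAdj conflict) s1 s2 := by
  induction s2 generalizing s1 with
  | nil =>
      have : s1 = [] := hperm.eq_nil
      subst this; exact .refl _
  | cons b t ih =>
      have hb : b ∈ s1 := hperm.mem_iff.mpr (List.mem_cons_self)
      obtain ⟨p, q, rfl⟩ := List.append_of_mem hb
      have hbp : b ∉ p := fun h =>
        (List.disjoint_of_nodup_append hnodup) h (List.mem_cons_self)
      have hbq : b ∉ q := by
        have := (List.nodup_append.mp hnodup).2.1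
        exact (List.nodup_cons.mp this).1
      have hnd' : (p ++ q).Nodup := List.Nodup.sublist (by simp) hnodup
      -- idxOf computations
      have idxP : ∀ x : Cmd, x ∈ p →
          (p ++ b :: q).idxOf x = List.idxOf x p ∧ (p ++ q).idxOf x = List.idxOf x p := by
        intro x hx
        exact ⟨List.idxOf_append_of_mem hx, List.idxOf_append_of_mem hx⟩
      have idxQ : ∀ x : Cmd, x ∉ p → x ≠ b →
          (p ++ b :: q).idxOf x = p.length + 1 + List.idxOf x q ∧
          (p ++ q).idxOf x = p.length + List.idxOf x q := by
        intro x hx hxb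
        rw [List.idxOf_append_of_notMem hx, List.idxOf_append_of_notMem hx,
          List.idxOf_cons_ne _ (Ne.symm hxb)]
        omega
      -- no element of p conflicts with b
      have hc : ∀ a ∈ p, ¬ conflict a b := by
        intro a ha hcab
        have haS : a ∈ p ++ b :: q := List.mem_append_left _ ha
        have hne : a ≠ b := fun h => hbp (h ▸ ha)
        have h2a : (b :: t).idxOf b < (b :: t).idxOf a := by
          rw [List.idxOf_cons_self, List.idxOf_cons_ne _ hne.symm]
          exact Nat.succ_pos _
        have h1b : (p ++ b :: q).idxOf b < (p ++ b :: q).idxOf a :=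
          (horder b a hb haS (hsymm a b hcab)).mpr h2a
        have e1 := (idxP a ha).1
        have e2 : (p ++ b :: q).idxOf b = p.length := by
          rw [List.idxOf_append_of_notMem hbp, List.idxOf_cons_self]; omega
        have := List.idxOf_lt_length_iff.mpr ha
        omega
      have step1 := move_front (c := conflict) b p q hc
      have hperm' : (p ++ q).Perm t := by
        have h1 : (p ++ b :: q).Perm (b :: (p ++ q)) := List.perm_middle
        exact (h1.symm.trans hperm).cons_inv
      have horder' : ∀ a a', a ∈ p ++ q → a' ∈ p ++ q → conflict a a' →
          ((p ++ q).idxOf a < (p ++ q).idxOf a' ↔ t.idxOf a < t.idxOf a') := by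
        intro a a' ha ha' hcon
        have memb : ∀ x : Cmd, x ∈ p ++ q → x ≠ b ∧ x ∈ p ++ b :: q := by
          intro x hx
          rcases List.mem_append.mp hx with h | h
          · exact ⟨fun e => hbp (e ▸ h), List.mem_append_left _ h⟩
          · exact ⟨fun e => hbq (e ▸ h), List.mem_append_right _ (List.mem_cons_of_mem _ h)⟩
        obtain ⟨hna, haS⟩ := memb a ha
        obtain ⟨hna', haS'⟩ := memb a' ha'
        have hmain := horder a a' haS haS' hcon
        have eT : ∀ x : Cmd, x ≠ b → (b :: t).idxOf x = t.idxOf x + 1 := by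
          intro x hx
          rw [List.idxOf_cons_ne _ (Ne.symm hx)]
        rw [eT a hna, eT a' hna'] at hmain
        have h1 : (p ++ q).idxOf a < (p ++ q).idxOf a' ↔
            (p ++ b :: q).idxOf a < (p ++ b :: q).idxOf a' := by
          by_cases hap : a ∈ p <;> by_cases hap' : a' ∈ p
          · obtain ⟨e1, e2⟩ := idxP a hap; obtain ⟨e3, e4⟩ := idxP a' hap'
            omega
          · obtain ⟨e1, e2⟩ := idxP a hap; obtain ⟨e3, e4⟩ := idxQ a' hap' hna'
            have := List.idxOf_lt_length_iff.mpr hap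
            omega
          · obtain ⟨e1, e2⟩ := idxQ a hap hna; obtain ⟨e3, e4⟩ := idxP a' hap'
            have := List.idxOf_lt_length_iff.mpr hap'
            omega
          · obtain ⟨e1, e2⟩ := idxQ a hap hna; obtain ⟨e3, e4⟩ := idxQ a' hap' hna'
            omega
        rw [h1, hmain]
        omega
      have step2 := ih (p ++ q) hnd' hperm' horder'
      exact .trans _ _ _ step1 (eqv_cons b step2)
end
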